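/- Every coefficient of the Alexander polynomial Δ lies in {−1, 0, 1}; that is, all nonzero coefficients of Δ are equal to ±1. -/

import Mathlib

/-!
Put `Q = ∏ⱼ (1 + t^{cⱼ} + ⋯ + t^{(aⱼ-1)cⱼ}) / (1 - t^α)`; since `(1 - t^{cⱼ})(1 + ⋯ + t^{(aⱼ-1)cⱼ})
= 1 - t^α`, we get `Δ = (1 - t) Q`, so it suffices that every coefficient of `Q` is `0` or `1`.
Expanding the product, the coefficient of `t^N` in `Q` counts the tuples `0 ≤ kⱼ < aⱼ` with
`∑ kⱼ cⱼ ≤ N` and `∑ kⱼ cⱼ ≡ N (mod α)`. There is at most one such tuple: modulo `aᵢ` every term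
but `kᵢ cᵢ` vanishes, and `cᵢ` is invertible modulo `aᵢ`.
-/

open Finset PowerSeries

namespace PowerSeries

theorem one_sub_X_pow_mul_mk_dvd {R : Type*} [CommRing R] {d : ℕ} (hd : 0 < d) :
    (1 - X ^ d : R⟦X⟧) * mk (fun m => if d ∣ m then 1 else 0) = 1 := by
  ext N
  rw [sub_mul, one_mul, map_sub, coeff_X_pow_mul', coeff_mk, coeff_mk, coeff_one]
  by_cases hle : d ≤ N
  · have hN : N ≠ 0 := by omega
    simp [hN, hle, Nat.dvd_sub_iff_left hle dvd_rfl]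
  · have hdvd : d ∣ N ↔ N = 0 :=
      ⟨fun h => Nat.eq_zero_of_dvd_of_lt h (by omega), fun h => h ▸ dvd_zero d⟩
    simp [hle, hdvd]

theorem coeff_one_sub_X_mul_mem {f : ℤ⟦X⟧} (hf : ∀ n, coeff n f ∈ ({0, 1} : Set ℤ)) (n : ℕ) :
    coeff n ((1 - X) * f) ∈ ({-1, 0, 1} : Set ℤ) := by
  rw [sub_mul, one_mul, map_sub]
  cases n with
  | zero =>
    rw [coeff_zero_X_mul, sub_zero]
    rcases hf 0 with h | h <;> simp_all
  | succ n =>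
    rw [coeff_succ_X_mul]
    rcases hf (n + 1) with h | h <;> rcases hf n with h' | h' <;> simp_all

theorem coeff_sum_X_pow_mul_mk_dvd_mem {κ : Type*} {s : Finset κ} {e : κ → ℕ} {d : ℕ}
    (he : ∀ x ∈ s, ∀ y ∈ s, e x ≡ e y [MOD d] → x = y) (N : ℕ) :
    coeff N ((∑ x ∈ s, X ^ e x) * mk fun m => if d ∣ m then (1 : ℤ) else 0)
      ∈ ({0, 1} : Set ℤ) := by
  classical
  have hcoeff : coeff N ((∑ x ∈ s, (X : ℤ⟦X⟧) ^ e x) * mk fun m => if d ∣ m then (1 : ℤ) else 0)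
      = #{x ∈ s | e x ≤ N ∧ e x ≡ N [MOD d]} := by
    simp only [sum_mul, map_sum, coeff_X_pow_mul', coeff_mk, natCast_card_filter]
    refine sum_congr rfl fun x _ => ?_
    by_cases h : e x ≤ N
    · simp [h, Nat.modEq_iff_dvd' h]
    · simp [h]
  have hcard : #{x ∈ s | e x ≤ N ∧ e x ≡ N [MOD d]} ≤ 1 := by
    refine card_le_one.2 fun x hx y hy => ?_
    simp only [mem_filter] at hx hy
    exact he x hx.1 y hy.1 (hx.2.2.trans hy.2.2.symm)
  rw [hcoeff]
  rcases Nat.le_one_iff_eq_zero_or_eq_one.1 hcard with h | h <;> simp [h]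

end PowerSeries

section

variable {ι : Type*} [Fintype ι] {a c : ι → ℕ} {α : ℕ}

theorem prod_one_sub_pow_mul_sum_piFinset [DecidableEq ι] {R : Type*} [CommRing R] (x : R)
    (hac : ∀ i, a i * c i = α) :
    (∏ i, (1 - x ^ c i)) * ∑ k ∈ Fintype.piFinset fun i => range (a i), x ^ ∑ i, k i * c i
      = (1 - x ^ α) ^ Fintype.card ι := by
  have hsum : ∑ k ∈ Fintype.piFinset fun i => range (a i), x ^ ∑ i, k i * c i
      = ∏ i, ∑ m ∈ range (a i), (x ^ c i) ^ m := by
    rw [prod_univ_sum]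
    refine sum_congr rfl fun k _ => ?_
    rw [← prod_pow_eq_pow_sum]
    simp only [← pow_mul, mul_comm]
  rw [hsum, ← prod_mul_distrib, ← card_univ, ← prod_const]
  refine prod_congr rfl fun i _ => ?_
  rw [mul_neg_geom_sum, ← pow_mul, mul_comm, hac]

theorem PowerSeries.eq_one_sub_X_mul_of_mul_prod_eq [DecidableEq ι] {R : Type*} [CommRing R]
    {m : ℕ} (hac : ∀ i, a i * c i = α) (hα : 0 < α) (hcard : Fintype.card ι = m + 1)
    {f : R⟦X⟧} (hf : f * ∏ i, (1 - X ^ c i) = (1 - X ^ α) ^ m * (1 - X)) :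
    f = (1 - X) * ((∑ k ∈ Fintype.piFinset fun i => range (a i), X ^ ∑ i, k i * c i) *
      mk fun j => if α ∣ j then 1 else 0) := by
  have hc : ∀ i, c i ≠ 0 := fun i h => by have := hac i; rw [h, mul_zero] at this; omega
  have hunit : IsUnit (∏ i, (1 - X ^ c i) : R⟦X⟧) := by
    rw [isUnit_iff_constantCoeff]
    simp [map_prod, hc]
  refine hunit.mul_right_cancel ?_
  calc f * ∏ i, (1 - X ^ c i)
      = (1 - X ^ α) ^ m * (1 - X) * ((1 - X ^ α) * mk fun j => if α ∣ j then 1 else 0) := by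
        rw [hf, one_sub_X_pow_mul_mk_dvd hα, mul_one]
    _ = (1 - X) * (mk fun j => if α ∣ j then 1 else 0) * (1 - X ^ α) ^ (m + 1) := by ring
    _ = _ := by
      rw [← hcard, ← prod_one_sub_pow_mul_sum_piFinset X hac]
      ring

theorem Nat.coprime_of_mul_eq_prod [DecidableEq ι]
    (hcop : Pairwise fun i j => Nat.Coprime (a i) (a j)) (ha : ∀ i, 0 < a i)
    (hac : ∀ i, a i * c i = ∏ j, a j) (i : ι) : Nat.Coprime (a i) (c i) := by
  have hc : c i = ∏ j ∈ univ.erase i, a j :=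
    Nat.eq_of_mul_eq_mul_left (ha i) (by rw [hac i, mul_prod_erase _ _ (mem_univ i)])
  rw [hc]
  exact Nat.Coprime.prod_right fun j hj => hcop (ne_of_mem_erase hj).symm

theorem eq_of_sum_mul_modEq (hcop : Pairwise fun i j => Nat.Coprime (a i) (a j))
    (hac : ∀ i, a i * c i = α) (hc : ∀ i, Nat.Coprime (a i) (c i)) {k k' : ι → ℕ}
    (hk : ∀ i, k i < a i) (hk' : ∀ i, k' i < a i)
    (h : ∑ i, k i * c i ≡ ∑ i, k' i * c i [MOD α]) : k = k' := by
  funext i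
  have hsum : ∀ l : ι → ℕ, ((∑ j, l j * c j : ℕ) : ZMod (a i)) = l i * c i := by
    intro l
    push_cast
    refine sum_eq_single i (fun j _ hji => ?_) (by simp)
    have hdvd : a i ∣ c j :=
      (hcop hji.symm).dvd_of_dvd_mul_left ⟨c i, by rw [hac, hac]⟩
    rw [(ZMod.natCast_eq_zero_iff _ _).2 hdvd, mul_zero]
  have hmul : (k i : ZMod (a i)) * c i = k' i * c i := by
    rw [← hsum k, ← hsum k', ZMod.natCast_eq_natCast_iff]
    exact h.of_dvd ⟨c i, (hac i).symm⟩
  have hki := (ZMod.unitOfCoprime (c i) (hc i).symm).isUnit.mul_right_cancel hmul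
  rwa [ZMod.natCast_eq_natCast_iff', Nat.mod_eq_of_lt (hk i), Nat.mod_eq_of_lt (hk' i)] at hki

end

/-- Every coefficient of the Alexander polynomial
`Δ = (1 − t^α)^{n−2}(1 − t)/∏_j(1 − t^{c_j})` lies in `{−1, 0, 1}`; that is,
all nonzero coefficients of `Δ` are equal to `±1`. -/
theorem alexander_poly_coeffs_pm_one
    (n : ℕ) (hn : 3 ≤ n) (a : Fin (n - 1) → ℕ)
    (ha : ∀ j, 2 ≤ a j)
    (hcop : ∀ i j, i ≠ j → Nat.Coprime (a i) (a j))
    (α : ℕ) (hα : α = ∏ j, a j)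
    (c : Fin (n - 1) → ℕ) (hc : ∀ j, a j * c j = α)
    (Δ : Polynomial ℤ)
    (hΔ : Δ * ∏ j, (1 - (Polynomial.X : Polynomial ℤ) ^ (c j))
        = (1 - (Polynomial.X : Polynomial ℤ) ^ α) ^ (n - 2) *
            (1 - (Polynomial.X : Polynomial ℤ))) :
    ∀ k : ℕ, Δ.coeff k ∈ ({-1, 0, 1} : Set ℤ) := by
  have ha0 : ∀ j, 0 < a j := fun j => by have := ha j; omega
  have hα0 : 0 < α := hα ▸ prod_pos fun j _ => ha0 j
  have hcard : Fintype.card (Fin (n - 1)) = n - 2 + 1 := by rw [Fintype.card_fin]; omega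
  have hΔ' : (Δ : ℤ⟦X⟧) * ∏ j, (1 - X ^ c j) = (1 - X ^ α) ^ (n - 2) * (1 - X) := by
    simpa only [map_mul, map_prod, map_pow, map_sub, map_one, Polynomial.coe_X,
      Polynomial.coeToPowerSeries.ringHom_apply] using
      congrArg (Polynomial.coeToPowerSeries.ringHom (R := ℤ)) hΔ
  have hQ := coeff_sum_X_pow_mul_mk_dvd_mem (s := Fintype.piFinset fun j => range (a j))
    (e := fun k => ∑ j, k j * c j) (d := α)
    fun k hk k' hk' => eq_of_sum_mul_modEq (fun i j h => hcop i j h) hc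
      (Nat.coprime_of_mul_eq_prod (fun i j h => hcop i j h) ha0 fun i => (hc i).trans hα)
      (by simpa using hk) (by simpa using hk')
  intro k
  rw [← Polynomial.coeff_coe, eq_one_sub_X_mul_of_mul_prod_eq hc hα0 hcard hΔ']
  exact coeff_one_sub_X_mul_mem hQ k
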